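/- For positive reals a, b and a matrix M of rank r with singular values s₁,…,s_r, the minimum of a‖W‖_F² + b‖U‖_F² over all factorizations UW = M (inner dimension ≥ r) equals 2√(ab) Σᵢ sᵢ. -/

import Mathlib

/-!
For any factorization `UW = P diag(s) Q` we have `∑ sᵢ = tr((PᵀU)(WQᵀ))`; by Cauchy–Schwarz and
because `X ↦ PᵀX` and `X ↦ XQᵀ` do not increase the Frobenius norm, `(∑ sᵢ)² ≤ ‖U‖²‖W‖²`, and AM–GM
gives `a‖W‖² + b‖U‖² ≥ 2√(ab) ‖U‖‖W‖ ≥ 2√(ab) ∑ sᵢ`. The bound is attained by the balanced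
factorization `U = P diag(α) E`, `W = Eᵀ diag(β) Q`, where `αᵢβᵢ = sᵢ`, `bαᵢ² = aβᵢ² = √(ab) sᵢ`
and `E` is an `r × k` matrix with orthonormal rows.
-/

open Matrix Finset

def frobSq {m n : ℕ} (M : Matrix (Fin m) (Fin n) ℝ) : ℝ := ∑ i, ∑ j, (M i j) ^ 2

section Frobenius

variable {m n k r : ℕ}

lemma frobSq_nonneg (M : Matrix (Fin m) (Fin n) ℝ) : 0 ≤ frobSq M :=
  sum_nonneg fun _ _ => sum_nonneg fun _ _ => sq_nonneg _

lemma frobSq_transpose (M : Matrix (Fin m) (Fin n) ℝ) : frobSq Mᵀ = frobSq M :=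
  sum_comm

lemma frobSq_eq_trace (M : Matrix (Fin m) (Fin n) ℝ) : frobSq M = trace (Mᵀ * M) := by
  simp only [frobSq, trace, Matrix.diag, mul_apply, transpose_apply, sq]
  exact sum_comm

lemma sq_trace_mul_le (A : Matrix (Fin m) (Fin n) ℝ) (B : Matrix (Fin n) (Fin m) ℝ) :
    trace (A * B) ^ 2 ≤ frobSq A * frobSq B := by
  have h := sum_mul_sq_le_sq_mul_sq (univ : Finset (Fin m × Fin n))
    (fun p => A p.1 p.2) (fun p => B p.2 p.1)
  simp only [← Finset.univ_product_univ, sum_product] at h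
  rw [frobSq, frobSq, sum_comm (f := fun i j => B i j ^ 2)]
  simpa only [trace, Matrix.diag, mul_apply] using h

lemma frobSq_transpose_mul_le {P : Matrix (Fin m) (Fin r) ℝ} (hP : Pᵀ * P = 1)
    (U : Matrix (Fin m) (Fin k) ℝ) : frobSq (Pᵀ * U) ≤ frobSq U := by
  have hPP : Pᵀ * (P * (Pᵀ * U)) = Pᵀ * U := by rw [← Matrix.mul_assoc, hP, Matrix.one_mul]
  have hproj : (U - P * (Pᵀ * U))ᵀ * (U - P * (Pᵀ * U)) = Uᵀ * U - (Pᵀ * U)ᵀ * (Pᵀ * U) := by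
    simp only [transpose_sub, transpose_mul, transpose_transpose, Matrix.sub_mul, Matrix.mul_sub,
      Matrix.mul_assoc, hPP]
    abel
  have hpyth : frobSq U = frobSq (Pᵀ * U) + frobSq (U - P * (Pᵀ * U)) := by
    rw [frobSq_eq_trace, frobSq_eq_trace, frobSq_eq_trace, hproj, trace_sub]
    ring
  linarith [frobSq_nonneg (U - P * (Pᵀ * U))]

lemma frobSq_mul_transpose_le {Q : Matrix (Fin r) (Fin n) ℝ} (hQ : Q * Qᵀ = 1)
    (W : Matrix (Fin k) (Fin n) ℝ) : frobSq (W * Qᵀ) ≤ frobSq W :=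
  calc frobSq (W * Qᵀ) = frobSq (Q * Wᵀ) := by
        rw [← frobSq_transpose, transpose_mul, transpose_transpose]
    _ ≤ frobSq Wᵀ := by
        simpa only [transpose_transpose] using
          frobSq_transpose_mul_le (P := Qᵀ) (by rwa [transpose_transpose]) Wᵀ
    _ = frobSq W := frobSq_transpose W

lemma sq_sum_le_frobSq_mul_frobSq {P : Matrix (Fin m) (Fin r) ℝ} {Q : Matrix (Fin r) (Fin n) ℝ}
    {s : Fin r → ℝ} {U : Matrix (Fin m) (Fin k) ℝ} {W : Matrix (Fin k) (Fin n) ℝ}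
    (hP : Pᵀ * P = 1) (hQ : Q * Qᵀ = 1) (hUW : U * W = P * diagonal s * Q) :
    (∑ i, s i) ^ 2 ≤ frobSq U * frobSq W := by
  have htrace : trace ((Pᵀ * U) * (W * Qᵀ)) = ∑ i, s i := by
    rw [show Pᵀ * U * (W * Qᵀ) = Pᵀ * (U * W) * Qᵀ by simp only [Matrix.mul_assoc], hUW,
      show Pᵀ * (P * diagonal s * Q) * Qᵀ = (Pᵀ * P) * diagonal s * (Q * Qᵀ) by
        simp only [Matrix.mul_assoc],
      hP, hQ, Matrix.one_mul, Matrix.mul_one, trace_diagonal]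
  calc (∑ i, s i) ^ 2 ≤ frobSq (Pᵀ * U) * frobSq (W * Qᵀ) := htrace ▸ sq_trace_mul_le _ _
    _ ≤ frobSq U * frobSq W :=
      mul_le_mul (frobSq_transpose_mul_le hP U) (frobSq_mul_transpose_le hQ W)
        (frobSq_nonneg _) (frobSq_nonneg _)

lemma frobSq_mul_diagonal_mul {P : Matrix (Fin m) (Fin r) ℝ} {E : Matrix (Fin r) (Fin k) ℝ}
    (hP : Pᵀ * P = 1) (hE : E * Eᵀ = 1) (d : Fin r → ℝ) :
    frobSq (P * diagonal d * E) = ∑ i, d i ^ 2 := by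
  rw [frobSq_eq_trace, transpose_mul, transpose_mul, diagonal_transpose,
    show Eᵀ * (diagonal d * Pᵀ) * (P * diagonal d * E)
      = Eᵀ * (diagonal d * (Pᵀ * P) * diagonal d * E) by simp only [Matrix.mul_assoc],
    trace_mul_comm, hP, Matrix.mul_one, Matrix.mul_assoc, hE, Matrix.mul_one,
    diagonal_mul_diagonal, trace_diagonal]
  simp only [sq]

lemma exists_mul_transpose_eq_one (hk : r ≤ k) : ∃ E : Matrix (Fin r) (Fin k) ℝ, E * Eᵀ = 1 := by
  refine ⟨(1 : Matrix (Fin k) (Fin k) ℝ).submatrix (Fin.castLE hk) id, ?_⟩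
  rw [transpose_submatrix, transpose_one, ← submatrix_mul _ _ _ _ _ Function.bijective_id,
    Matrix.one_mul, submatrix_one _ (Fin.castLE_injective hk)]

end Frobenius

lemma two_sqrt_mul_mul_le_add {a b c x y : ℝ} (ha : 0 ≤ a) (hb : 0 ≤ b) (hc : 0 ≤ c)
    (hx : 0 ≤ x) (hy : 0 ≤ y) (h : c ^ 2 ≤ x * y) :
    2 * √(a * b) * c ≤ a * y + b * x := by
  have hc' : c ≤ √x * √y := by
    rw [← Real.sqrt_mul hx, ← Real.sqrt_sq hc]
    exact Real.sqrt_le_sqrt h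
  calc 2 * √(a * b) * c ≤ 2 * √(a * b) * (√x * √y) := by gcongr
    _ = 2 * (√a * √y) * (√b * √x) := by rw [Real.sqrt_mul ha]; ring
    _ ≤ (√a * √y) ^ 2 + (√b * √x) ^ 2 := two_mul_le_add_sq _ _
    _ = a * y + b * x := by
      rw [mul_pow, mul_pow, Real.sq_sqrt ha, Real.sq_sqrt hb, Real.sq_sqrt hx, Real.sq_sqrt hy]

lemma exists_balanced_factorization {a b s : ℝ} (ha : 0 < a) (hb : 0 < b) (hs : 0 ≤ s) :
    ∃ x y : ℝ, x * y = s ∧ a * y ^ 2 + b * x ^ 2 = 2 * √(a * b) * s := by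
  have hpa := Real.sqrt_pos.2 ha
  have hpb := Real.sqrt_pos.2 hb
  refine ⟨√(√a * s / √b), √(√b * s / √a), ?_, ?_⟩
  · rw [← Real.sqrt_mul (by positivity)]
    convert Real.sqrt_sq hs using 2
    field_simp
  · rw [Real.sq_sqrt (by positivity), Real.sq_sqrt (by positivity),
      show a * (√b * s / √a) + b * (√a * s / √b) = (a / √a * √b + b / √b * √a) * s by ring,
      Real.div_sqrt, Real.div_sqrt, Real.sqrt_mul ha.le]
    ring

theorem stmt14_general {m n k r : ℕ} (hk : r ≤ k) (a b : ℝ) (ha : 0 < a) (hb : 0 < b)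
    (M : Matrix (Fin m) (Fin n) ℝ)
    (P : Matrix (Fin m) (Fin r) ℝ) (s : Fin r → ℝ) (Q : Matrix (Fin r) (Fin n) ℝ)
    (hs : ∀ i, 0 < s i) (hP : Pᵀ * P = 1) (hQ : Q * Qᵀ = 1)
    (hSVD : M = P * Matrix.diagonal s * Q) :
    IsLeast
      {v : ℝ | ∃ (U : Matrix (Fin m) (Fin k) ℝ) (W : Matrix (Fin k) (Fin n) ℝ),
          U * W = M ∧ v = a * frobSq W + b * frobSq U}
      (2 * Real.sqrt (a * b) * ∑ i, s i) := by
  refine ⟨?_, ?_⟩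
  · choose α β hαβ hcost using fun i => exists_balanced_factorization ha hb (hs i).le
    obtain ⟨E, hE⟩ := exists_mul_transpose_eq_one hk
    refine ⟨P * diagonal α * E, Eᵀ * diagonal β * Q, ?_, ?_⟩
    · rw [hSVD, show P * diagonal α * E * (Eᵀ * diagonal β * Q)
          = P * diagonal α * (E * Eᵀ) * diagonal β * Q by simp only [Matrix.mul_assoc],
        hE, Matrix.mul_one, Matrix.mul_assoc P, diagonal_mul_diagonal]
      simp only [hαβ]
    · rw [← frobSq_transpose (Eᵀ * _ * Q), transpose_mul, transpose_mul, transpose_transpose,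
        diagonal_transpose, ← Matrix.mul_assoc,
        frobSq_mul_diagonal_mul (by rwa [transpose_transpose]) hE,
        frobSq_mul_diagonal_mul hP hE, mul_sum, mul_sum, mul_sum, ← sum_add_distrib]
      exact sum_congr rfl fun i _ => (hcost i).symm
  · rintro v ⟨U, W, hUW, rfl⟩
    exact two_sqrt_mul_mul_le_add ha.le hb.le (sum_nonneg fun i _ => (hs i).le)
      (frobSq_nonneg U) (frobSq_nonneg W) (sq_sum_le_frobSq_mul_frobSq hP hQ (hUW.trans hSVD))

/-- For `a, b > 0` and a rank-`r` matrix `M` with singular values `s₁,…,s_r`, the minimum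
of `a‖W‖_F² + b‖U‖_F²` over all factorizations `UW = M` (inner dimension `k ≥ r`) equals
`2√(ab) Σᵢ sᵢ`. -/
theorem stmt14 {m n k r : ℕ} (hk : r ≤ k) (a b : ℝ) (ha : 0 < a) (hb : 0 < b)
    (M : Matrix (Fin m) (Fin n) ℝ) (hrank : M.rank = r)
    (P : Matrix (Fin m) (Fin r) ℝ) (s : Fin r → ℝ) (Q : Matrix (Fin r) (Fin n) ℝ)
    (hs : ∀ i, 0 < s i) (hP : Pᵀ * P = 1) (hQ : Q * Qᵀ = 1)
    (hSVD : M = P * Matrix.diagonal s * Q) :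
    IsLeast
      {v : ℝ | ∃ (U : Matrix (Fin m) (Fin k) ℝ) (W : Matrix (Fin k) (Fin n) ℝ),
          U * W = M ∧ v = a * frobSq W + b * frobSq U}
      (2 * Real.sqrt (a * b) * ∑ i, s i) :=
  stmt14_general hk a b ha hb M P s Q hs hP hQ hSVD
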